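/- arXiv:2405.17833 — 9 statements merged into one kernel-verified Lean document; each statement's English description precedes it below -/
import Mathlib

section
/- Let E be a finite set. For each e ∈ E let ℓ̃(e) > 0 be a real number, let m(e) ≥ 1 be a natural number, and let p(e,k) ≥ 0 be real numbers for 1 ≤ k ≤ m(e). Set q(e) = ∑_{k=1}^{m(e)} p(e,k) and ℓ'(e) = ℓ̃(e)·q(e), and assume ∑_{e∈E} ℓ'(e) > 0. Then for every ε ∈ [0,1]: (∑_{e∈E} ℓ̃(e) · ∑_{k=1}^{m(e)} p(e,k)(1 − ε^k)) / (∑_{e∈E} ℓ'(e)) ≤ (∑_{e∈E} ℓ'(e)(1 − ε^{m(e)})) / (∑_{e∈E} ℓ'(e)). Moreover the inequality is strict if 0 < ε < 1 and there exist e ∈ E and k < m(e) with p(e,k)·ℓ̃(e) > 0. -/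
/-! Since `0 ≤ ε ≤ 1`, every `k ≤ m(e)` has `1 - ε ^ k ≤ 1 - ε ^ m(e)`, so the two
numerators compare edge by edge and, within an edge, term by term; one term with
`k < m(e)`, `p(e,k) > 0` and `0 < ε < 1` makes the comparison strict. -/

open Finset

theorem sum_mul_one_sub_pow_le {s : Finset ℕ} {n : ℕ} {p : ℕ → ℝ} {ε : ℝ}
    (hs : ∀ k ∈ s, k ≤ n) (hp : ∀ k ∈ s, 0 ≤ p k) (hε0 : 0 ≤ ε) (hε1 : ε ≤ 1) :
    ∑ k ∈ s, p k * (1 - ε ^ k) ≤ (∑ k ∈ s, p k) * (1 - ε ^ n) := by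
  rw [sum_mul]
  exact sum_le_sum fun k hk => mul_le_mul_of_nonneg_left
    (sub_le_sub_left (pow_le_pow_of_le_one hε0 hε1 (hs k hk)) 1) (hp k hk)

theorem sum_mul_one_sub_pow_lt {s : Finset ℕ} {n : ℕ} {p : ℕ → ℝ} {ε : ℝ}
    (hs : ∀ k ∈ s, k ≤ n) (hp : ∀ k ∈ s, 0 ≤ p k) (hε0 : 0 < ε) (hε1 : ε < 1)
    (h : ∃ k ∈ s, k < n ∧ 0 < p k) :
    ∑ k ∈ s, p k * (1 - ε ^ k) < (∑ k ∈ s, p k) * (1 - ε ^ n) := by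
  obtain ⟨k₀, hk₀, hlt, hpk₀⟩ := h
  rw [sum_mul]
  refine sum_lt_sum (fun k hk => ?_) ⟨k₀, hk₀, ?_⟩
  · exact mul_le_mul_of_nonneg_left
      (sub_le_sub_left (pow_le_pow_of_le_one hε0.le hε1.le (hs k hk)) 1) (hp k hk)
  · exact mul_lt_mul_of_pos_left
      (sub_lt_sub_left (pow_lt_pow_right_of_lt_one₀ hε0 hε1 hlt) 1) hpk₀

theorem FD_ratio_le_PD_ratio_general {α : Type*} (E : Finset α)
    (ℓt : α → ℝ) (m : α → ℕ) (p : α → ℕ → ℝ)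
    (hℓ : ∀ e ∈ E, 0 < ℓt e)
    (hp : ∀ e ∈ E, ∀ k ∈ Finset.Icc 1 (m e), 0 ≤ p e k)
    (hpos : 0 < ∑ e ∈ E, ℓt e * (∑ k ∈ Finset.Icc 1 (m e), p e k))
    (ε : ℝ) (hε0 : 0 ≤ ε) (hε1 : ε ≤ 1) :
    ((∑ e ∈ E, ℓt e * ∑ k ∈ Finset.Icc 1 (m e), p e k * (1 - ε ^ k)) /
        (∑ e ∈ E, ℓt e * (∑ k ∈ Finset.Icc 1 (m e), p e k)) ≤
      (∑ e ∈ E, (ℓt e * (∑ k ∈ Finset.Icc 1 (m e), p e k)) * (1 - ε ^ (m e))) /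
        (∑ e ∈ E, ℓt e * (∑ k ∈ Finset.Icc 1 (m e), p e k))) ∧
    ((0 < ε ∧ ε < 1 ∧ ∃ e ∈ E, ∃ k ∈ Finset.Icc 1 (m e), k < m e ∧ 0 < p e k * ℓt e) →
      (∑ e ∈ E, ℓt e * ∑ k ∈ Finset.Icc 1 (m e), p e k * (1 - ε ^ k)) /
        (∑ e ∈ E, ℓt e * (∑ k ∈ Finset.Icc 1 (m e), p e k)) <
      (∑ e ∈ E, (ℓt e * (∑ k ∈ Finset.Icc 1 (m e), p e k)) * (1 - ε ^ (m e))) /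
        (∑ e ∈ E, ℓt e * (∑ k ∈ Finset.Icc 1 (m e), p e k))) := by
  have hle : ∀ e, ∀ k ∈ Icc 1 (m e), k ≤ m e := fun _ _ hk => (mem_Icc.1 hk).2
  have hedge : ∀ e ∈ E, ℓt e * ∑ k ∈ Icc 1 (m e), p e k * (1 - ε ^ k) ≤
      ℓt e * (∑ k ∈ Icc 1 (m e), p e k) * (1 - ε ^ m e) := fun e he => by
    rw [mul_assoc]
    exact mul_le_mul_of_nonneg_left
      (sum_mul_one_sub_pow_le (hle e) (hp e he) hε0 hε1) (hℓ e he).le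
  refine ⟨div_le_div_of_nonneg_right (sum_le_sum hedge) hpos.le, ?_⟩
  rintro ⟨hε0', hε1', e₀, he₀, k₀, hk₀, hlt, hpℓ⟩
  have hpk₀ : 0 < p e₀ k₀ := pos_of_mul_pos_left hpℓ (hℓ e₀ he₀).le
  refine div_lt_div_of_pos_right (sum_lt_sum hedge ⟨e₀, he₀, ?_⟩) hpos
  rw [mul_assoc]
  exact mul_lt_mul_of_pos_left (sum_mul_one_sub_pow_lt (hle e₀) (hp e₀ he₀) hε0' hε1'
    ⟨k₀, hk₀, hlt, hpk₀⟩) (hℓ e₀ he₀)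

/-- Core inequality of Proposition 6: the expected proportion of feature
diversity surviving a field-of-bullets extinction event is at most the
corresponding proportion of phylogenetic diversity (with edge lengths `ℓ'`),
with strict inequality if `0 < ε < 1` and some feature can survive to a number
of leaves `k` strictly smaller than `m e`. -/
theorem FD_ratio_le_PD_ratio {α : Type*} (E : Finset α)
    (ℓt : α → ℝ) (m : α → ℕ) (p : α → ℕ → ℝ)
    (hℓ : ∀ e ∈ E, 0 < ℓt e) (hm : ∀ e ∈ E, 1 ≤ m e)
    (hp : ∀ e ∈ E, ∀ k ∈ Finset.Icc 1 (m e), 0 ≤ p e k)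
    (hpos : 0 < ∑ e ∈ E, ℓt e * (∑ k ∈ Finset.Icc 1 (m e), p e k))
    (ε : ℝ) (hε0 : 0 ≤ ε) (hε1 : ε ≤ 1) :
    ((∑ e ∈ E, ℓt e * ∑ k ∈ Finset.Icc 1 (m e), p e k * (1 - ε ^ k)) /
        (∑ e ∈ E, ℓt e * (∑ k ∈ Finset.Icc 1 (m e), p e k)) ≤
      (∑ e ∈ E, (ℓt e * (∑ k ∈ Finset.Icc 1 (m e), p e k)) * (1 - ε ^ (m e))) /
        (∑ e ∈ E, ℓt e * (∑ k ∈ Finset.Icc 1 (m e), p e k))) ∧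
    ((0 < ε ∧ ε < 1 ∧ ∃ e ∈ E, ∃ k ∈ Finset.Icc 1 (m e), k < m e ∧ 0 < p e k * ℓt e) →
      (∑ e ∈ E, ℓt e * ∑ k ∈ Finset.Icc 1 (m e), p e k * (1 - ε ^ k)) /
        (∑ e ∈ E, ℓt e * (∑ k ∈ Finset.Icc 1 (m e), p e k)) <
      (∑ e ∈ E, (ℓt e * (∑ k ∈ Finset.Icc 1 (m e), p e k)) * (1 - ε ^ (m e))) /
        (∑ e ∈ E, ℓt e * (∑ k ∈ Finset.Icc 1 (m e), p e k))) :=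
  FD_ratio_le_PD_ratio_general E ℓt m p hℓ hp hpos ε hε0 hε1
end

section
/- For every real s with 0 < s < 1: ∑_{k=1}^{∞} (1 − (1−s)^k) / (k(k+1)) = s·log(1/s)/(1−s). -/
/-!
Split `1/((k+1)(k+2)) = 1/(k+1) - 1/(k+2)`. The constant part telescopes to `1`; the part
weighted by `q^(k+1)`, `q = 1 - s`, is a combination of the logarithm series
`∑ q^(k+1)/(k+1) = -log (1 - q)` and of the same series shifted by one index.
-/

open Filter Topology Real

theorem hasSum_sub_succ_of_antitone {f : ℕ → ℝ} (hf : Antitone f)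
    (hf0 : Tendsto f atTop (𝓝 0)) : HasSum (fun n ↦ f n - f (n + 1)) (f 0) := by
  rw [hasSum_iff_tendsto_nat_of_nonneg fun n ↦ sub_nonneg.2 (hf n.le_succ)]
  simp_rw [Finset.sum_range_sub']
  simpa using tendsto_const_nhds.sub hf0

theorem hasSum_one_div_succ_mul_succ_succ :
    HasSum (fun k : ℕ ↦ 1 / (((k : ℝ) + 1) * ((k : ℝ) + 2))) 1 := by
  have hanti : Antitone fun n : ℕ ↦ 1 / ((n : ℝ) + 1) := fun a b hab ↦ by
    dsimp only
    gcongr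
  convert hasSum_sub_succ_of_antitone hanti tendsto_one_div_add_atTop_nhds_zero_nat using 1
  · ext k
    push_cast
    field_simp
    ring
  · simp

theorem hasSum_pow_succ_succ_div_succ_succ {x : ℝ} (hx : |x| < 1) :
    HasSum (fun k : ℕ ↦ x ^ (k + 2) / ((k : ℝ) + 2)) (-log (1 - x) - x) := by
  have hshift := (hasSum_nat_add_iff' 1).2 (hasSum_pow_div_log_of_abs_lt_one hx)
  simpa [add_assoc, one_add_one_eq_two] using hshift

theorem hasSum_pow_succ_div_succ_mul_succ_succ {x : ℝ} (hx : |x| < 1) (hx0 : x ≠ 0) :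
    HasSum (fun k : ℕ ↦ x ^ (k + 1) / (((k : ℝ) + 1) * ((k : ℝ) + 2)))
      (1 + (1 - x) * log (1 - x) / x) := by
  have hsplit : ∀ k : ℕ, x ^ (k + 1) / (((k : ℝ) + 1) * ((k : ℝ) + 2))
      = x ^ (k + 1) / ((k : ℝ) + 1) - x⁻¹ * (x ^ (k + 2) / ((k : ℝ) + 2)) := fun k ↦ by
    field_simp
    ring
  have hsum : -log (1 - x) - x⁻¹ * (-log (1 - x) - x) = 1 + (1 - x) * log (1 - x) / x := by
    field_simp
    ring
  simp_rw [hsplit, ← hsum]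
  exact (hasSum_pow_div_log_of_abs_lt_one hx).sub
    ((hasSum_pow_succ_succ_div_succ_succ hx).mul_left x⁻¹)

/-- The identity underlying `φ_PD(s) = s ln(1/s)/(1−s)` for Yule trees:
`∑_{k=1}^{∞} (1 − (1−s)^k)/(k(k+1)) = s·log(1/s)/(1−s)` for `0 < s < 1`.
(The sum over `k ≥ 1` is written as a sum over `k : ℕ` via `k+1`.) -/
theorem yule_PD_loss_series (s : ℝ) (h0 : 0 < s) (h1 : s < 1) :
    ∑' k : ℕ, (1 - (1 - s) ^ (k + 1)) / (((k : ℝ) + 1) * ((k : ℝ) + 2))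
      = s * Real.log (1 / s) / (1 - s) := by
  have hq_abs : |1 - s| < 1 := by rw [abs_lt]; constructor <;> linarith
  have hq_ne : 1 - s ≠ 0 := by linarith
  simp_rw [sub_div]
  rw [(hasSum_one_div_succ_mul_succ_succ.sub
    (hasSum_pow_succ_div_succ_mul_succ_succ hq_abs hq_ne)).tsum_eq, sub_sub_cancel, one_div, log_inv]
  field_simp
  ring
end

section
/- The function f : (0,1) → ℝ defined by f(s) = s·log(1/s)/(1−s) is strictly increasing on the open interval (0,1) and concave on (0,1). -/
/-!
Writing `f(s) = -s log s / (1 - s)`, one computes `f'(s) = (s - 1 - log s) / (1 - s)²`, which is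
positive because `log s < s - 1`, and `f''(s) = (s² - 1 - 2 s log s) / (s (1 - s)³)`. On `(0, 1)`
the numerator of `f''` is negative: divided by `2 s`, `s² - 1 < 2 s log s` reads
`sinh (log s) < log s`, which holds as `log s < 0`.
-/

open Real Set

noncomputable def pdProportion (s : ℝ) : ℝ := s * log (1 / s) / (1 - s)

lemma Real.sq_sub_one_lt_two_mul_mul_log {x : ℝ} (hx0 : 0 < x) (hx1 : x < 1) :
    x ^ 2 - 1 < 2 * x * log x := by
  have h := sinh_lt_self_iff.2 (log_neg hx0 hx1)
  rw [sinh_log hx0] at h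
  calc x ^ 2 - 1 = x * (x - x⁻¹) := by field_simp
    _ < x * (2 * log x) := by gcongr; linarith
    _ = 2 * x * log x := by ring

lemma hasDerivAt_pdProportion {x : ℝ} (hx0 : x ≠ 0) (hx1 : x ≠ 1) :
    HasDerivAt pdProportion ((x - 1 - log x) / (1 - x) ^ 2) x := by
  have hf : pdProportion = fun s => -(s * log s) / (1 - s) := by
    funext s
    rw [pdProportion, one_div, log_inv, mul_neg]
  rw [hf]
  refine (((hasDerivAt_id' x).fun_mul (hasDerivAt_log hx0)).fun_neg.fun_div
    ((hasDerivAt_id' x).const_sub 1) (sub_ne_zero.2 hx1.symm)).congr_deriv ?_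
  field_simp
  ring

lemma hasDerivAt_sub_one_sub_log_div_one_sub_sq {x : ℝ} (hx0 : x ≠ 0) (hx1 : x ≠ 1) :
    HasDerivAt (fun s => (s - 1 - log s) / (1 - s) ^ 2)
      ((x ^ 2 - 1 - 2 * x * log x) / (x * (1 - x) ^ 3)) x := by
  have hx1' : 1 - x ≠ 0 := sub_ne_zero.2 hx1.symm
  refine ((((hasDerivAt_id' x).sub_const 1).fun_sub (hasDerivAt_log hx0)).fun_div
    (((hasDerivAt_id' x).const_sub 1).fun_pow 2) (pow_ne_zero 2 hx1')).congr_deriv ?_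
  field_simp
  ring

lemma continuousOn_pdProportion : ContinuousOn pdProportion (Ioo 0 1) :=
  fun _ hx => (hasDerivAt_pdProportion hx.1.ne' hx.2.ne).continuousAt.continuousWithinAt

lemma strictMonoOn_pdProportion : StrictMonoOn pdProportion (Ioo 0 1) := by
  refine strictMonoOn_of_hasDerivWithinAt_pos (convex_Ioo 0 1) continuousOn_pdProportion
    (f' := fun x => (x - 1 - log x) / (1 - x) ^ 2) ?_ ?_ <;>
    rw [interior_Ioo] <;> rintro x ⟨hx0, hx1⟩
  · exact (hasDerivAt_pdProportion hx0.ne' hx1.ne).hasDerivWithinAt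
  · have := log_lt_sub_one_of_pos hx0 hx1.ne
    have : 0 < 1 - x := sub_pos.2 hx1
    exact div_pos (by linarith) (by positivity)

lemma concaveOn_pdProportion : ConcaveOn ℝ (Ioo 0 1) pdProportion := by
  refine concaveOn_of_hasDerivWithinAt2_nonpos (convex_Ioo 0 1) continuousOn_pdProportion
    (f' := fun x => (x - 1 - log x) / (1 - x) ^ 2)
    (f'' := fun x => (x ^ 2 - 1 - 2 * x * log x) / (x * (1 - x) ^ 3)) ?_ ?_ ?_ <;>
    rw [interior_Ioo] <;> rintro x ⟨hx0, hx1⟩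
  · exact (hasDerivAt_pdProportion hx0.ne' hx1.ne).hasDerivWithinAt
  · exact (hasDerivAt_sub_one_sub_log_div_one_sub_sq hx0.ne' hx1.ne).hasDerivWithinAt
  · have := sq_sub_one_lt_two_mul_mul_log hx0 hx1
    have : 0 < 1 - x := sub_pos.2 hx1
    exact div_nonpos_of_nonpos_of_nonneg (by linarith) (by positivity)

/-- The function `φ_PD(s) = s·log(1/s)/(1−s)` is strictly increasing and
concave on the open interval `(0,1)`. -/
theorem yule_PD_proportion_strictMono_concave :
    StrictMonoOn (fun s : ℝ => s * Real.log (1 / s) / (1 - s)) (Set.Ioo 0 1) ∧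
    ConcaveOn ℝ (Set.Ioo 0 1) (fun s : ℝ => s * Real.log (1 / s) / (1 - s)) :=
  ⟨strictMonoOn_pdProportion, concaveOn_pdProportion⟩
end

section
/- Let ρ and s be real numbers with 0 < ρ < 1, 0 < s < 1 and ρ ≠ 1 − s. Then ρ·s·log(s/(1−ρ)) / ((ρ+s−1)·log(1/(1−ρ))) > s. -/
/-!
With `a = 1 - ρ`, the claim says that the secant slope of `log` from `a` to `s` exceeds the
secant slope `-log a / ρ` from `a` to `1`. Since `s < 1`, this is strict concavity of `log`.
-/

open Real

/-- For a birth–death tree with `ρ = μ/λ ∈ (0,1)` and survival probability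
`s ∈ (0,1)` with `ρ ≠ 1 − s`, the limiting surviving proportion of
phylogenetic diversity `φ_PD(s) = ρs·log(s/(1−ρ))/((ρ+s−1)·log(1/(1−ρ)))`
strictly exceeds `s`. -/
theorem birth_death_PD_proportion_gt (ρ s : ℝ)
    (hρ0 : 0 < ρ) (hρ1 : ρ < 1) (hs0 : 0 < s) (hs1 : s < 1) (hne : ρ ≠ 1 - s) :
    s < ρ * s * Real.log (s / (1 - ρ)) / ((ρ + s - 1) * Real.log (1 / (1 - ρ))) := by
  set a := 1 - ρ
  have ha0 : 0 < a := by linarith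
  have hsa : s - a ≠ 0 := fun h ↦ hne (by linarith)
  have hlog_pos : 0 < -log a := neg_pos.2 (log_neg ha0 (by linarith))
  have hsecant : (log 1 - log a) / (1 - a) < (log s - log a) / (s - a) :=
    strictConcaveOn_log_Ioi.secant_strict_mono ha0 hs0 (Set.mem_Ioi.2 one_pos) (sub_ne_zero.1 hsa)
      (by linarith) hs1
  rw [log_one, zero_sub, show 1 - a = ρ by ring, div_lt_iff₀ hρ0] at hsecant
  have hφ : ρ * s * log (s / a) / ((ρ + s - 1) * log (1 / a)) =
      s * (ρ * ((log s - log a) / (s - a)) / -log a) := by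
    rw [log_div hs0.ne' ha0.ne', one_div, log_inv, show ρ + s - 1 = s - a by ring]
    field_simp
  rw [hφ]
  exact lt_mul_of_one_lt_right hs0 ((one_lt_div hlog_pos).2 (by linarith))
end

section
/- Fix a real s with 0 < s < 1. Then ρ·s·log(s/(1−ρ)) / ((ρ+s−1)·log(1/(1−ρ))) tends to 1 as ρ tends to 1 from below. -/
/-! The proportion factors as `ρs/(ρ+s-1)`, continuous at `ρ = 1` with value `1`, times
`log (s/(1-ρ)) / log (1/(1-ρ)) = 1 - log s / log (1-ρ)`, which tends to `1` because
`log (1-ρ) → -∞`. -/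

open Filter Topology Real

theorem tendsto_log_div_div_log_one_div_nhdsNE_zero {a : ℝ} (ha : a ≠ 0) :
    Tendsto (fun x : ℝ => log (a / x) / log (1 / x)) (𝓝[≠] 0) (𝓝 1) := by
  have hlog : Tendsto log (𝓝[≠] 0) atBot := tendsto_log_nhdsNE_zero
  have hsum : Tendsto (fun x => 1 - log a / log x) (𝓝[≠] 0) (𝓝 1) := by
    simpa using (tendsto_const_nhds.div_atBot hlog).const_sub (1 : ℝ)
  refine hsum.congr' ?_
  filter_upwards [self_mem_nhdsWithin, hlog.eventually_ne_atBot 0] with x hx hlogx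
  rw [log_div ha hx, log_div one_ne_zero hx, log_one]
  field_simp
  ring

theorem birth_death_PD_proportion_tendsto_one_general (s : ℝ) (hs0 : 0 < s) :
    Tendsto (fun ρ : ℝ =>
        ρ * s * Real.log (s / (1 - ρ)) / ((ρ + s - 1) * Real.log (1 / (1 - ρ))))
      (nhdsWithin 1 (Set.Iio 1)) (nhds 1) := by
  have hrat : Tendsto (fun ρ : ℝ => ρ * s / (ρ + s - 1)) (𝓝 1) (𝓝 1) := by
    have hc : ContinuousAt (fun ρ : ℝ => ρ * s / (ρ + s - 1)) 1 := by
      fun_prop (disch := simpa using hs0.ne')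
    simpa [hs0.ne'] using hc.tendsto
  have hlog : Tendsto (fun ρ : ℝ => log (s / (1 - ρ)) / log (1 / (1 - ρ)))
      (𝓝[≠] 1) (𝓝 1) := by
    refine (tendsto_log_div_div_log_one_div_nhdsNE_zero hs0.ne').comp ?_
    rw [Tendsto, map_subLeft_nhdsNE, sub_self]
  have hIio : 𝓝[<] (1 : ℝ) ≤ 𝓝[≠] 1 := nhdsWithin_mono _ fun ρ hρ => ne_of_lt hρ
  simpa only [mul_div_mul_comm, mul_one] using
    ((hrat.mono_left nhdsWithin_le_nhds).mul hlog).mono_left hIio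

/-- As `ρ = μ/λ` approaches `1` from below (the critical birth–death case),
the limiting surviving proportion of phylogenetic diversity
`φ_PD(s) = ρs·log(s/(1−ρ))/((ρ+s−1)·log(1/(1−ρ)))` tends to `1`, for every
fixed survival probability `s ∈ (0,1)`. -/
theorem birth_death_PD_proportion_tendsto_one (s : ℝ) (hs0 : 0 < s) (hs1 : s < 1) :
    Tendsto (fun ρ : ℝ =>
        ρ * s * Real.log (s / (1 - ρ)) / ((ρ + s - 1) * Real.log (1 / (1 - ρ))))
      (nhdsWithin 1 (Set.Iio 1)) (nhds 1) :=
  birth_death_PD_proportion_tendsto_one_general s hs0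
end

section
/- Let λ > μ > 0 and 0 < s < 1 be real numbers, set ρ = μ/λ and a = λ − μ, and assume s ≠ 1 − ρ. Define I(x) = ∫_0^∞ e^{−aτ} / ((1−x−ρ)·e^{−aτ} + x) dτ for x ∈ (0,1]. Then s·I(s)/I(1) = ρ·s·log(s/(1−ρ)) / ((ρ+s−1)·log(1/(1−ρ))). -/
/-!
With `c = 1 - x - ρ`, the integrand `e^{-aτ} / (c e^{-aτ} + x)` has the explicit antiderivative
`-log (c e^{-aτ} + x) / (a c)`, so `I x = log ((1 - ρ) / x) / (a (1 - x - ρ))`. The factors `a`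
cancel in `s I(s) / I(1)` and what remains is the phylogenetic-diversity formula.
-/

open MeasureTheory Real Set Filter Topology

lemma mul_add_pos_of_mem_Icc {c x u : ℝ} (hx : 0 < x) (hcx : 0 < c + x) (hu : u ∈ Icc (0 : ℝ) 1) :
    0 < c * u + x := by
  obtain ⟨hu0, hu1⟩ := hu
  rcases le_or_gt 0 c with hc | hc
  · nlinarith [mul_nonneg hc hu0]
  · nlinarith [mul_le_mul_of_nonpos_left hu1 hc.le]

lemma hasDerivAt_log_mul_exp_add {a c x t : ℝ} (h : c * exp (-a * t) + x ≠ 0) :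
    HasDerivAt (fun t => log (c * exp (-a * t) + x))
      (-(a * c) * (exp (-a * t) / (c * exp (-a * t) + x))) t := by
  have hexp : HasDerivAt (fun t => exp (-a * t)) (exp (-a * t) * -a) t := by
    simpa using ((hasDerivAt_id t).const_mul (-a)).exp
  convert ((hexp.const_mul c).add_const x).log h using 1
  ring

lemma tendsto_log_mul_exp_add_atTop {a c x : ℝ} (ha : 0 < a) (hx : x ≠ 0) :
    Tendsto (fun t => log (c * exp (-a * t) + x)) atTop (𝓝 (log x)) := by
  have hexp : Tendsto (fun t => exp (-a * t)) atTop (𝓝 0) :=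
    tendsto_exp_atBot.comp (tendsto_id.const_mul_atTop_of_neg (neg_lt_zero.mpr ha))
  have hden : Tendsto (fun t => c * exp (-a * t) + x) atTop (𝓝 x) := by
    simpa using (hexp.const_mul c).add_const x
  exact (continuousAt_log hx).tendsto.comp hden

theorem integral_Ioi_exp_div_mul_exp_add {a c x : ℝ} (ha : 0 < a) (hc : c ≠ 0) (hx : 0 < x)
    (hcx : 0 < c + x) :
    ∫ τ in Ioi (0 : ℝ), exp (-a * τ) / (c * exp (-a * τ) + x) = log ((c + x) / x) / (a * c) := by
  have hden : ∀ τ ∈ Ici (0 : ℝ), 0 < c * exp (-a * τ) + x := fun τ hτ =>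
    mul_add_pos_of_mem_Icc hx hcx
      ⟨(exp_pos _).le, exp_le_one_iff.mpr (by nlinarith [mem_Ici.mp hτ])⟩
  have hderiv : ∀ τ ∈ Ici (0 : ℝ), HasDerivAt (fun t => -log (c * exp (-a * t) + x) / (a * c))
      (exp (-a * τ) / (c * exp (-a * τ) + x)) τ := fun τ hτ =>
    ((hasDerivAt_log_mul_exp_add (hden τ hτ).ne').neg.div_const (a * c)).congr_deriv
      (by field_simp)
  have hnonneg : ∀ τ ∈ Ioi (0 : ℝ), 0 ≤ exp (-a * τ) / (c * exp (-a * τ) + x) := fun τ hτ =>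
    div_nonneg (exp_pos _).le (hden τ (Ioi_subset_Ici_self hτ)).le
  rw [integral_Ioi_of_hasDerivAt_of_nonneg' hderiv hnonneg
    ((tendsto_log_mul_exp_add_atTop ha hx.ne').neg.div_const (a * c))]
  simp only [mul_zero, exp_zero, mul_one]
  rw [log_div hcx.ne' hx.ne']
  ring

theorem FD_formula_reduces_to_PD_general (lam mu s ρ a : ℝ)
    (hmu : 0 < mu) (hlam : mu < lam) (hs0 : 0 < s)
    (hρ : ρ = mu / lam) (ha : a = lam - mu) (hne : s ≠ 1 - ρ)
    (I : ℝ → ℝ)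
    (hI : ∀ x, I x = ∫ τ in Set.Ioi (0 : ℝ),
        Real.exp (-a * τ) / ((1 - x - ρ) * Real.exp (-a * τ) + x)) :
    s * I s / I 1
      = ρ * s * Real.log (s / (1 - ρ)) / ((ρ + s - 1) * Real.log (1 / (1 - ρ))) := by
  have hlam0 : 0 < lam := hmu.trans hlam
  have hρ0 : 0 < ρ := hρ ▸ div_pos hmu hlam0
  have hρ1 : 0 < 1 - ρ := by rw [hρ, sub_pos]; exact (div_lt_one hlam0).mpr hlam
  have ha0 : 0 < a := by rw [ha]; linarith
  have hIx : ∀ x, 0 < x → x ≠ 1 - ρ → I x = log ((1 - ρ) / x) / (a * (1 - x - ρ)) := by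
    intro x hx hxρ
    rw [hI, integral_Ioi_exp_div_mul_exp_add ha0 (by contrapose! hxρ; linarith) hx (by linarith),
      show 1 - x - ρ + x = 1 - ρ by ring]
  rw [hIx s hs0 hne, hIx 1 one_pos (by linarith), log_div hρ1.ne' hs0.ne',
    log_div hs0.ne' hρ1.ne', log_div one_ne_zero hρ1.ne', div_one, log_one]
  have hlog : log (1 - ρ) ≠ 0 := (log_neg hρ1 (by linarith)).ne
  have hsρ : ρ + s - 1 ≠ 0 := by contrapose! hne; linarith
  have hsρ' : 1 - s - ρ ≠ 0 := by contrapose! hne; linarith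
  field_simp
  ring

/-- When the feature loss rate is `ν = 0`, the formula
`φ_FD(s) = s·I(s)/I(1)` with
`I(x) = ∫_0^∞ e^{−aτ}/((1−x−ρ)e^{−aτ} + x) dτ`, `ρ = μ/λ`, `a = λ − μ`,
reduces to the explicit phylogenetic diversity formula
`φ_PD(s) = ρs·log(s/(1−ρ))/((ρ+s−1)·log(1/(1−ρ)))`. -/
theorem FD_formula_reduces_to_PD (lam mu s ρ a : ℝ)
    (hmu : 0 < mu) (hlam : mu < lam) (hs0 : 0 < s) (hs1 : s < 1)
    (hρ : ρ = mu / lam) (ha : a = lam - mu) (hne : s ≠ 1 - ρ)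
    (I : ℝ → ℝ)
    (hI : ∀ x, I x = ∫ τ in Set.Ioi (0 : ℝ),
        Real.exp (-a * τ) / ((1 - x - ρ) * Real.exp (-a * τ) + x)) :
    s * I s / I 1
      = ρ * s * Real.log (s / (1 - ρ)) / ((ρ + s - 1) * Real.log (1 / (1 - ρ))) :=
  FD_formula_reduces_to_PD_general lam mu s ρ a hmu hlam hs0 hρ ha hne I hI
end

section
/- Let X be a finite type and ε : X → ℝ with 0 ≤ ε(x) ≤ 1 for all x. Let μ be the product measure on (X → Bool) whose x-th coordinate is Bernoulli with P(true) = 1 − ε(x) (coordinates independent). Let E be a finite set, C : E → Finset X with C(e) nonempty for all e, and ℓ : E → ℝ with ℓ(e) ≥ 0. For ω : X → Bool define PD(ω) = ∑_{e ∈ E : ∃ x ∈ C(e), ω(x) = true} ℓ(e). Then ∫ ((∑_{e∈E} ℓ(e)) − PD(ω)) dμ(ω) = ∑_{e∈E} ℓ(e) · ∏_{x ∈ C(e)} ε(x). -/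
open MeasureTheory Finset

/-!
The PD lost is the total length of the edges all of whose descendant species are extinct, so the
loss is `∑ e, ℓ e · 1[every x ∈ C e dies]`. By linearity of the integral its expectation is
`∑ e, ℓ e · P(every x ∈ C e dies)`, and by independence that probability is `∏ x ∈ C e, ε x`.
-/

lemma PMF.toMeasure_real_bernoulli_false {p : NNReal} (h : p ≤ 1) :
    (PMF.bernoulli p h).toMeasure.real {false} = 1 - p := by
  rw [measureReal_def, PMF.toMeasure_apply_singleton _ _ (measurableSet_singleton _),
    PMF.bernoulli_apply]
  simp [ENNReal.toReal_sub_of_le (ENNReal.coe_le_one_iff.mpr h) ENNReal.one_ne_top]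

lemma MeasureTheory.Measure.real_pi_pi_finset {ι : Type*} [Fintype ι] {α : ι → Type*}
    [∀ i, MeasurableSpace (α i)] (μ : ∀ i, Measure (α i)) [∀ i, IsProbabilityMeasure (μ i)]
    (t : ∀ i, Set (α i)) (s : Finset ι) :
    (Measure.pi μ).real ((s : Set ι).pi t) = ∏ i ∈ s, (μ i).real (t i) := by
  simp [measureReal_def, ENNReal.toReal_prod]

lemma MeasureTheory.integral_finset_sum_indicator_const {Ω ι : Type*} [MeasurableSpace Ω]
    {μ : Measure Ω} [IsFiniteMeasure μ] (s : Finset ι) {A : ι → Set Ω}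
    (hA : ∀ i ∈ s, MeasurableSet (A i)) (c : ι → ℝ) :
    ∫ ω, ∑ i ∈ s, (A i).indicator (fun _ => c i) ω ∂μ = ∑ i ∈ s, c i * μ.real (A i) := by
  rw [integral_finsetSum s fun i hi => (integrable_const (c i)).indicator (hA i hi)]
  refine sum_congr rfl fun i hi => ?_
  rw [integral_indicator_const _ (hA i hi), smul_eq_mul, mul_comm]

lemma Finset.sum_sub_sum_filter_exists_eq_true {X E M : Type*} [AddCommGroup M]
    (Es : Finset E) (C : E → Finset X) (ℓ : E → M) (ω : X → Bool) :
    (∑ e ∈ Es, ℓ e) - ∑ e ∈ Es.filter (fun e => ∃ x ∈ C e, ω x = true), ℓ e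
      = ∑ e ∈ Es, ((C e : Set X).pi fun _ => {false}).indicator (fun _ => ℓ e) ω := by
  classical
  rw [← sum_filter_add_sum_filter_not Es (fun e => ∃ x ∈ C e, ω x = true), add_sub_cancel_left,
    sum_filter]
  refine sum_congr rfl fun e _ => ?_
  simp [Set.indicator, Set.mem_pi]

/-- Expected loss of phylogenetic diversity under the generalised
field-of-bullets model: each species `x` survives independently with
probability `1 − ε x`, and the expected loss of PD equals
`∑_e ℓ e · ∏_{x ∈ C e} ε x`. -/
theorem expected_PD_loss_gFOB {X : Type*} [Fintype X]
    (ε : X → ℝ) (hε : ∀ x, 0 ≤ ε x ∧ ε x ≤ 1)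
    {E : Type*} (Es : Finset E) (C : E → Finset X)
    (ℓ : E → ℝ) :
    (∫ ω : X → Bool,
        ((∑ e ∈ Es, ℓ e) - ∑ e ∈ Es.filter (fun e => ∃ x ∈ C e, ω x = true), ℓ e)
      ∂(Measure.pi fun x => (PMF.bernoulli (Real.toNNReal (1 - ε x))
          (by simpa using (hε x).1)).toMeasure))
      = ∑ e ∈ Es, ℓ e * ∏ x ∈ C e, ε x := by
  simp_rw [sum_sub_sum_filter_exists_eq_true]
  rw [integral_finset_sum_indicator_const Es fun e _ => (Set.toFinite _).measurableSet]
  refine sum_congr rfl fun e _ => ?_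
  rw [Measure.real_pi_pi_finset]
  congr 1
  refine prod_congr rfl fun x _ => ?_
  rw [PMF.toMeasure_real_bernoulli_false, Real.coe_toNNReal _ (by linarith [(hε x).2])]
  ring
end

section
/- Let X be a finite type and ε : X → ℝ with 0 ≤ ε(x) ≤ 1. Let μ be the product measure on (X → Bool) whose x-th coordinate is Bernoulli with P(true) = 1 − ε(x) (coordinates independent). Let E be a finite set, C : E → Finset X with C(e) nonempty, and ℓ : E → ℝ with ℓ(e) ≥ 0; for a finite subset Y of X define PD(Y) = ∑_{e : C(e) ∩ Y ≠ ∅} ℓ(e), and let S(ω) = {x : ω(x) = true}. Then for every x₀ ∈ X: ∫ (PD(S(ω) ∪ {x₀}) − PD(S(ω) \ {x₀})) dμ(ω) = ∑_{e ∈ E : x₀ ∈ C(e)} ℓ(e) · ∏_{s ∈ C(e), s ≠ x₀} ε(s). -/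
open MeasureTheory Finset

/-! Adding `x₀` to the surviving set rather than removing it changes `PD` exactly by the edges
`e` with `x₀ ∈ C e` none of whose other descendants survive. Since coordinates are independent,
the probability that every species of `C e ∖ {x₀}` goes extinct is `∏ ε s`, and linearity of
expectation gives the formula. -/

namespace Finset

variable {ι α : Type*} [DecidableEq α]

theorem nonempty_inter_insert_and_not_nonempty_inter_erase_iff (C S : Finset α) (a : α) :
    (C ∩ insert a S).Nonempty ∧ ¬(C ∩ S.erase a).Nonempty ↔ a ∈ C ∧ Disjoint (C.erase a) S := by
  simp only [Finset.Nonempty, mem_inter, mem_insert, mem_erase, disjoint_left, not_exists]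
  grind

theorem sum_filter_inter_insert_sub_sum_filter_inter_erase {β : Type*} [AddCommGroup β]
    (s : Finset ι) (C : ι → Finset α) (f : ι → β) (a : α) (S : Finset α) :
    ∑ i ∈ s with (C i ∩ insert a S).Nonempty, f i - ∑ i ∈ s with (C i ∩ S.erase a).Nonempty, f i
      = ∑ i ∈ s with a ∈ C i, if Disjoint ((C i).erase a) S then f i else 0 := by
  classical
  have hmono : s.filter (fun i => (C i ∩ S.erase a).Nonempty) ⊆
      s.filter (fun i => (C i ∩ insert a S).Nonempty) :=
    monotone_filter_right s fun _ _ =>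
      Finset.Nonempty.mono <| inter_subset_inter_left <| (erase_subset a S).trans (subset_insert a S)
  rw [sub_eq_iff_eq_add, ← sum_sdiff hmono, ← filter_and_not, ← sum_filter, filter_filter]
  simp_rw [nonempty_inter_insert_and_not_nonempty_inter_erase_iff]

end Finset

theorem measureReal_pi_pi_finset {ι : Type*} [Fintype ι] {α : ι → Type*}
    [∀ i, MeasurableSpace (α i)] (μ : ∀ i, Measure (α i)) [∀ i, IsProbabilityMeasure (μ i)]
    (s : ∀ i, Set (α i)) (T : Finset ι) :
    (Measure.pi μ).real ((T : Set ι).pi s) = ∏ i ∈ T, (μ i).real (s i) := by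
  simp [measureReal_def, ENNReal.toReal_prod]

theorem measureReal_pi_disjoint_filter_eq_true {X : Type*} [Fintype X] [DecidableEq X]
    (μ : X → Measure Bool) [∀ x, IsProbabilityMeasure (μ x)] (T : Finset X) :
    (Measure.pi μ).real {ω | Disjoint T (univ.filter fun x => ω x = true)}
      = ∏ x ∈ T, (μ x).real {false} := by
  rw [← measureReal_pi_pi_finset]
  congr 1
  ext ω
  simp [disjoint_left]

theorem PMF.toMeasure_bernoulli_real_false (p : NNReal) (h : p ≤ 1) :
    (PMF.bernoulli p h).toMeasure.real {false} = 1 - p := by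
  rw [measureReal_def, PMF.toMeasure_apply_singleton _ _ (measurableSet_singleton _),
    PMF.bernoulli_apply, Bool.cond_false, ENNReal.coe_toReal, NNReal.coe_sub h, NNReal.coe_one]

/-- The gFOB formula for the stochastic diversity index `ψ_{x₀}`: the expected
increase in phylogenetic diversity when species `x₀` is present compared with
absent equals `∑_{e : x₀ ∈ C e} ℓ e · ∏_{s ∈ C e ∖ {x₀}} ε s`. -/
theorem psi_gFOB_formula {X : Type*} [Fintype X] [DecidableEq X]
    (ε : X → ℝ) (hε : ∀ x, 0 ≤ ε x ∧ ε x ≤ 1)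
    {E : Type*} (Es : Finset E) (C : E → Finset X)
    (ℓ : E → ℝ)
    (PD : Finset X → ℝ)
    (hPD : ∀ Y : Finset X,
      PD Y = ∑ e ∈ Es.filter (fun e => ((C e) ∩ Y).Nonempty), ℓ e)
    (x₀ : X) :
    (∫ ω : X → Bool,
        (PD (insert x₀ (Finset.univ.filter (fun x => ω x = true))) -
          PD ((Finset.univ.filter (fun x => ω x = true)).erase x₀))
      ∂(Measure.pi fun x => (PMF.bernoulli (Real.toNNReal (1 - ε x))
          (by simpa using (hε x).1)).toMeasure))
      = ∑ e ∈ Es.filter (fun e => x₀ ∈ C e), ℓ e * ∏ s ∈ (C e).erase x₀, ε s := by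
  let noSurvivor (e : E) : Set (X → Bool) :=
    {ω | Disjoint ((C e).erase x₀) (univ.filter fun x => ω x = true)}
  have hdiff (ω : X → Bool) :
      PD (insert x₀ (univ.filter fun x => ω x = true)) -
        PD ((univ.filter fun x => ω x = true).erase x₀) =
      ∑ e ∈ Es with x₀ ∈ C e, (noSurvivor e).indicator (fun _ => ℓ e) ω := by
    rw [hPD, hPD, sum_filter_inter_insert_sub_sum_filter_inter_erase]
    simp only [noSurvivor, Set.indicator_apply, Set.mem_ofPred_eq]
  have hextinct (x : X) : (PMF.bernoulli (Real.toNNReal (1 - ε x))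
      (by simpa using (hε x).1)).toMeasure.real {false} = ε x := by
    rw [PMF.toMeasure_bernoulli_real_false, Real.coe_toNNReal _ (by linarith [(hε x).2])]
    ring
  simp_rw [hdiff]
  rw [integral_finsetSum _ fun e _ => (integrable_const (ℓ e)).indicator .of_discrete]
  refine sum_congr rfl fun e _ => ?_
  rw [integral_indicator_const _ .of_discrete, measureReal_pi_disjoint_filter_eq_true,
    smul_eq_mul, mul_comm]
  simp_rw [hextinct]
end

section
/- Let X be a finite type and ε : X → ℝ with 0 ≤ ε(x) ≤ 1. Let μ be the product measure on (X → Bool) whose x-th coordinate is Bernoulli with P(true) = 1 − ε(x) (coordinates independent). Let E be a finite set, C : E → Finset X with C(e) nonempty, and ℓ : E → ℝ with ℓ(e) ≥ 0; for a finite subset Y of X define PD(Y) = ∑_{e : C(e) ∩ Y ≠ ∅} ℓ(e), and let S(ω) = {x : ω(x) = true}. Then for every x₀ ∈ X: ∫ (PD(S(ω) ∪ {x₀}) − PD(S(ω))) dμ(ω) = ε(x₀) · (∑_{e ∈ E : x₀ ∈ C(e)} ℓ(e) · ∏_{s ∈ C(e), s ≠ x₀} ε(s)). -/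
open MeasureTheory Finset
open scoped NNReal

/-! Adding `x₀` to the survivor set `S` raises `PD` by `ℓ e` exactly for the edges `e` with
`x₀ ∈ C e` and `C e ∩ S = ∅`. By linearity the expectation is the sum over these edges of `ℓ e`
times the probability that every species of `C e` goes extinct, which by independence is
`∏ s ∈ C e, ε s = ε x₀ * ∏ s ∈ (C e).erase x₀, ε s`. -/

section PhyloDiversity

variable {X E : Type*} [DecidableEq X]

def phyloDiversity (Es : Finset E) (C : E → Finset X) (ℓ : E → ℝ) (Y : Finset X) : ℝ :=
  ∑ e ∈ Es.filter (fun e => (C e ∩ Y).Nonempty), ℓ e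

theorem phyloDiversity_insert_sub (Es : Finset E) (C : E → Finset X) (ℓ : E → ℝ)
    (x : X) (Y : Finset X) :
    phyloDiversity Es C ℓ (insert x Y) - phyloDiversity Es C ℓ Y =
      ∑ e ∈ Es.filter (fun e => x ∈ C e), if Disjoint (C e) Y then ℓ e else 0 := by
  rw [phyloDiversity, phyloDiversity, sum_filter, sum_filter, sum_filter, ← sum_sub_distrib]
  refine sum_congr rfl fun e _ => ?_
  by_cases hx : x ∈ C e
  · by_cases hY : Disjoint (C e) Y <;> simp [hx, hY, ← not_disjoint_iff_nonempty_inter]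
  · simp [hx, inter_insert_of_notMem hx]

end PhyloDiversity

theorem PMF.bernoulli_toMeasure_real_false {p : ℝ≥0} (hp : p ≤ 1) :
    (PMF.bernoulli p hp).toMeasure.real {false} = 1 - p := by
  rw [measureReal_def, PMF.toMeasure_apply_singleton _ _ (measurableSet_singleton _),
    PMF.bernoulli_apply]
  simp [hp]

section FieldOfBullets

variable {X : Type*} [Fintype X]

theorem measureReal_pi_bernoulli_forall_false {p : X → ℝ≥0} (hp : ∀ x, p x ≤ 1)
    (A : Finset X) :
    (Measure.pi fun x => (PMF.bernoulli (p x) (hp x)).toMeasure).real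
      ((A : Set X).pi fun _ => {false}) = ∏ x ∈ A, (1 - (p x : ℝ)) := by
  rw [measureReal_def, Measure.pi_pi_finset, ENNReal.toReal_prod]
  exact prod_congr rfl fun x _ => PMF.bernoulli_toMeasure_real_false (hp x)

theorem integral_ite_disjoint_pi_bernoulli [DecidableEq X] {p : X → ℝ≥0}
    (hp : ∀ x, p x ≤ 1) (A : Finset X) (c : ℝ) :
    ∫ ω, (if Disjoint A (univ.filter fun x => ω x = true) then c else 0)
      ∂(Measure.pi fun x => (PMF.bernoulli (p x) (hp x)).toMeasure) =
        (∏ x ∈ A, (1 - (p x : ℝ))) * c := by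
  have hset : {ω : X → Bool | Disjoint A (univ.filter fun x => ω x = true)} =
      (A : Set X).pi fun _ => {false} := by
    ext ω
    simp [disjoint_left]
  calc _ = ∫ ω, ((A : Set X).pi fun _ => {false}).indicator (fun _ => c) ω
        ∂(Measure.pi fun x => (PMF.bernoulli (p x) (hp x)).toMeasure) := by
        simp only [← hset, Set.indicator_apply, Set.mem_ofPred_eq]
    _ = _ := by
      rw [integral_indicator_const _ (Set.toFinite _).measurableSet,
        measureReal_pi_bernoulli_forall_false, smul_eq_mul]

end FieldOfBullets

/-- The EDGE2 relationship `ψ'_{x₀} = ψ_{x₀} · ε(x₀)`: the expected increase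
in phylogenetic diversity when species `x₀` is certainly present compared to
when its survival is uncertain equals `ε(x₀)` times the gFOB index
`ψ_{x₀} = ∑_{e : x₀ ∈ C e} ℓ e · ∏_{s ∈ C e ∖ {x₀}} ε s`. -/
theorem psi_prime_eq_psi_mul_eps {X : Type*} [Fintype X] [DecidableEq X]
    (ε : X → ℝ) (hε : ∀ x, 0 ≤ ε x ∧ ε x ≤ 1)
    {E : Type*} (Es : Finset E) (C : E → Finset X)
    (ℓ : E → ℝ)
    (PD : Finset X → ℝ)
    (hPD : ∀ Y : Finset X,
      PD Y = ∑ e ∈ Es.filter (fun e => ((C e) ∩ Y).Nonempty), ℓ e)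
    (x₀ : X) :
    (∫ ω : X → Bool,
        (PD (insert x₀ (Finset.univ.filter (fun x => ω x = true))) -
          PD (Finset.univ.filter (fun x => ω x = true)))
      ∂(Measure.pi fun x => (PMF.bernoulli (Real.toNNReal (1 - ε x))
          (by simpa using (hε x).1)).toMeasure))
      = ε x₀ * ∑ e ∈ Es.filter (fun e => x₀ ∈ C e), ℓ e * ∏ s ∈ (C e).erase x₀, ε s := by
  obtain rfl : PD = phyloDiversity Es C ℓ := funext hPD
  have hextinct : ∀ x, 1 - (Real.toNNReal (1 - ε x) : ℝ) = ε x := fun x => by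
    rw [Real.coe_toNNReal _ (sub_nonneg.2 (hε x).2)]; ring
  simp_rw [phyloDiversity_insert_sub]
  rw [integral_finsetSum _ fun e _ => Integrable.of_finite, mul_sum]
  refine sum_congr rfl fun e he => ?_
  rw [integral_ite_disjoint_pi_bernoulli, ← mul_prod_erase _ _ (mem_filter.1 he).2]
  simp only [hextinct]
  ring
end
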